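/- arXiv:1010.0982 — 2 statements merged into one kernel-verified Lean document; each statement's English description precedes it below -/
import Mathlib

section
/- Let C and D be CDG-categories and (F, a): C → D a QDG-functor, i.e., F is a degree-preserving additive functor of the underlying graded categories and a assigns to each X ∈ C an element a_X ∈ Hom_D(F(X), F(X)) of degree 1 such that F(d(f)) = d(F(f)) + a_Y F(f) − (−1)^{|f|} F(f) a_X for every homogeneous f: X → Y. Define (h_F)_X = h_{F(X)} + d(a_X) + a_X² − F(h_X). Then the collection (h_F)_X is a morphism of QDG-functors F → F of degree 2, i.e., for every homogeneous g: X → Y in C one has (h_F)_Y ∘ F(g) = F(g) ∘ (h_F)_X (note (−1)^{2|g|} = 1). -/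
/-!
The QDG-functor condition says that `F ∘ d = δ ∘ F`, where `δ f = d f + a_Y f - (-1)^{|f|} f a_X`
is the differential of `D` twisted by the `a`'s. Applying `F` to `d² g = h_Y g - g h_X` and
computing `δ² (F g)` by the Leibniz rule, `δ² f = (h + d a_Y + a_Y²) f - f (h + d a_X + a_X²)`,
the two expressions for `F (d² g)` rearrange into the naturality square for `h_F`.
-/

/-- The sign `(-1)^i` for `i : ℤ`. -/
def sgn (i : ℤ) : ℤ := if Even i then 1 else -1

/-- A (small) CDG-category: a `ℤ`-graded category with differentials `d` of degree `1`
on the Hom-groups satisfying the Leibniz rule with Koszul signs, and curvature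
elements `h X` of degree `2` with `d² f = h_Y ∘ f - f ∘ h_X` and `d (h X) = 0`. -/
structure CDGCat where
  Obj : Type
  Hom : Obj → Obj → Type
  [grp : ∀ X Y, AddCommGroup (Hom X Y)]
  gr : ∀ X Y, ℤ → AddSubgroup (Hom X Y)
  comp : ∀ {X Y Z : Obj}, Hom Y Z → Hom X Y → Hom X Z
  one : ∀ X, Hom X X
  d : ∀ {X Y : Obj}, Hom X Y → Hom X Y
  h : ∀ X, Hom X X
  comp_add_left : ∀ {X Y Z : Obj} (f f' : Hom Y Z) (g : Hom X Y),
    comp (f + f') g = comp f g + comp f' g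
  comp_add_right : ∀ {X Y Z : Obj} (f : Hom Y Z) (g g' : Hom X Y),
    comp f (g + g') = comp f g + comp f g'
  comp_assoc : ∀ {W X Y Z : Obj} (f : Hom Y Z) (g : Hom X Y) (e : Hom W X),
    comp (comp f g) e = comp f (comp g e)
  one_comp : ∀ {X Y : Obj} (f : Hom X Y), comp (one Y) f = f
  comp_one : ∀ {X Y : Obj} (f : Hom X Y), comp f (one X) = f
  one_mem : ∀ X, one X ∈ gr X X 0
  comp_mem : ∀ {X Y Z : Obj} {i j : ℤ} {f : Hom Y Z} {g : Hom X Y},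
    f ∈ gr Y Z i → g ∈ gr X Y j → comp f g ∈ gr X Z (i + j)
  d_add : ∀ {X Y : Obj} (f g : Hom X Y), d (f + g) = d f + d g
  d_mem : ∀ {X Y : Obj} {i : ℤ} {f : Hom X Y}, f ∈ gr X Y i → d f ∈ gr X Y (i + 1)
  leibniz : ∀ {X Y Z : Obj} (i : ℤ) (f : Hom Y Z), f ∈ gr Y Z i →
    ∀ g : Hom X Y, d (comp f g) = comp (d f) g + sgn i • comp f (d g)
  h_mem : ∀ X, h X ∈ gr X X 2
  d_sq : ∀ {X Y : Obj} (f : Hom X Y), d (d f) = comp (h Y) f - comp f (h X)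
  d_h : ∀ X, d (h X) = 0

attribute [instance] CDGCat.grp

lemma sgn_one : sgn 1 = -1 := by simp [sgn]

lemma sgn_add_one (i : ℤ) : sgn (i + 1) = -sgn i := by
  by_cases h : Even i <;> simp [sgn, h]

lemma sgn_mul_self (i : ℤ) : sgn i * sgn i = 1 := by
  unfold sgn; split <;> norm_num

namespace CDGCat

variable (C : CDGCat) {X Y Z : C.Obj}

lemma d_sub (f g : C.Hom X Y) : C.d (f - g) = C.d f - C.d g :=
  map_sub (AddMonoidHom.mk' C.d C.d_add) f g

lemma d_zsmul (n : ℤ) (f : C.Hom X Y) : C.d (n • f) = n • C.d f :=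
  map_zsmul (AddMonoidHom.mk' C.d C.d_add) n f

lemma comp_sub_left (f f' : C.Hom Y Z) (g : C.Hom X Y) :
    C.comp (f - f') g = C.comp f g - C.comp f' g :=
  map_sub (AddMonoidHom.mk' (C.comp · g) (C.comp_add_left · · g)) f f'

lemma comp_sub_right (f : C.Hom Y Z) (g g' : C.Hom X Y) :
    C.comp f (g - g') = C.comp f g - C.comp f g' :=
  map_sub (AddMonoidHom.mk' (C.comp f) (C.comp_add_right f)) g g'

lemma comp_zsmul_left (n : ℤ) (f : C.Hom Y Z) (g : C.Hom X Y) :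
    C.comp (n • f) g = n • C.comp f g :=
  map_zsmul (AddMonoidHom.mk' (C.comp · g) (C.comp_add_left · · g)) n f

lemma comp_zsmul_right (n : ℤ) (f : C.Hom Y Z) (g : C.Hom X Y) :
    C.comp f (n • g) = n • C.comp f g :=
  map_zsmul (AddMonoidHom.mk' (C.comp f) (C.comp_add_right f)) n g

def twistD (a : C.Hom X X) (b : C.Hom Y Y) (i : ℤ) (f : C.Hom X Y) : C.Hom X Y :=
  C.d f + C.comp b f - sgn i • C.comp f a

def twistCurv (a : C.Hom X X) : C.Hom X X :=
  C.h X + C.d a + C.comp a a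

lemma d_twistD {a : C.Hom X X} {b : C.Hom Y Y} (hb : b ∈ C.gr Y Y 1) {i : ℤ} {f : C.Hom X Y}
    (hf : f ∈ C.gr X Y i) :
    C.d (C.twistD a b i f) = C.comp (C.h Y) f - C.comp f (C.h X) + C.comp (C.d b) f
      - C.comp b (C.d f) - sgn i • C.comp (C.d f) a - C.comp f (C.d a) := by
  have hbf : C.d (C.comp b f) = C.comp (C.d b) f - C.comp b (C.d f) := by
    rw [C.leibniz 1 b hb f, sgn_one, neg_one_smul, sub_eq_add_neg]
  have hfa : C.d (C.comp f a) = C.comp (C.d f) a + sgn i • C.comp f (C.d a) :=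
    C.leibniz i f hf a
  rw [twistD, C.d_sub, C.d_add, C.d_sq, hbf, C.d_zsmul, hfa, smul_add, smul_smul,
    sgn_mul_self, one_smul]
  abel

theorem twistD_twistD {a : C.Hom X X} {b : C.Hom Y Y} (hb : b ∈ C.gr Y Y 1) {i : ℤ}
    {f : C.Hom X Y} (hf : f ∈ C.gr X Y i) :
    C.twistD a b (i + 1) (C.twistD a b i f)
      = C.comp (C.twistCurv b) f - C.comp f (C.twistCurv a) := by
  rw [twistD, C.d_twistD hb hf, sgn_add_one, neg_smul, sub_neg_eq_add]
  simp only [twistD, twistCurv, C.comp_add_left, C.comp_add_right, C.comp_sub_left,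
    C.comp_sub_right, C.comp_zsmul_left, C.comp_zsmul_right, C.comp_assoc, smul_add,
    smul_sub, smul_smul, sgn_mul_self, one_smul]
  abel

end CDGCat

theorem qdg_functor_curvature_is_natural_general
    (C D : CDGCat)
    (F : C.Obj → D.Obj)
    (Fm : ∀ {X Y : C.Obj}, C.Hom X Y → D.Hom (F X) (F Y))
    (a : ∀ X : C.Obj, D.Hom (F X) (F X))
    (Fm_add : ∀ {X Y : C.Obj} (f g : C.Hom X Y), Fm (f + g) = Fm f + Fm g)
    (Fm_mem : ∀ {X Y : C.Obj} (i : ℤ) (f : C.Hom X Y),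
      f ∈ C.gr X Y i → Fm f ∈ D.gr (F X) (F Y) i)
    (Fm_comp : ∀ {X Y Z : C.Obj} (f : C.Hom Y Z) (g : C.Hom X Y),
      Fm (C.comp f g) = D.comp (Fm f) (Fm g))
    (a_mem : ∀ X : C.Obj, a X ∈ D.gr (F X) (F X) 1)
    (Fm_d : ∀ {X Y : C.Obj} (i : ℤ) (f : C.Hom X Y), f ∈ C.gr X Y i →
      Fm (C.d f) = D.d (Fm f) + D.comp (a Y) (Fm f) - sgn i • D.comp (Fm f) (a X)) :
    ∀ {X Y : C.Obj} (i : ℤ) (g : C.Hom X Y), g ∈ C.gr X Y i →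
      D.comp (D.h (F Y) + D.d (a Y) + D.comp (a Y) (a Y) - Fm (C.h Y)) (Fm g)
        = D.comp (Fm g) (D.h (F X) + D.d (a X) + D.comp (a X) (a X) - Fm (C.h X)) := by
  intro X Y i g hg
  have Fm_sub : Fm (C.comp (C.h Y) g - C.comp g (C.h X))
      = Fm (C.comp (C.h Y) g) - Fm (C.comp g (C.h X)) :=
    map_sub (AddMonoidHom.mk' Fm Fm_add) _ _
  have via_C : Fm (C.d (C.d g)) = D.comp (Fm (C.h Y)) (Fm g) - D.comp (Fm g) (Fm (C.h X)) := by
    rw [C.d_sq, Fm_sub, Fm_comp, Fm_comp]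
  have via_D : Fm (C.d (C.d g))
      = D.comp (D.twistCurv (a Y)) (Fm g) - D.comp (Fm g) (D.twistCurv (a X)) := by
    rw [Fm_d (i + 1) _ (C.d_mem hg), Fm_d i g hg]
    exact D.twistD_twistD (a_mem Y) (Fm_mem i g hg)
  rw [D.comp_sub_left, D.comp_sub_right, sub_eq_sub_iff_sub_eq_sub]
  exact via_D.symm.trans via_C

/-- The curvature of a QDG-functor is a morphism of QDG-functors of
degree `2`.  A QDG-functor `(F, a) : C → D` between CDG-categories consists of a
degree-preserving additive functor `F` and degree-`1` elements `a X : F X → F X`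
with `F (d f) = d (F f) + a_Y ∘ F f - (-1)^{|f|} F f ∘ a_X` for homogeneous `f`.
With `(h_F)_X = h_{F X} + d (a X) + (a X)² - F (h X)`, the conclusion is that for
every homogeneous `g : X → Y` one has `(h_F)_Y ∘ F g = F g ∘ (h_F)_X`. -/
theorem qdg_functor_curvature_is_natural
    (C D : CDGCat)
    (F : C.Obj → D.Obj)
    (Fm : ∀ {X Y : C.Obj}, C.Hom X Y → D.Hom (F X) (F Y))
    (a : ∀ X : C.Obj, D.Hom (F X) (F X))
    (Fm_add : ∀ {X Y : C.Obj} (f g : C.Hom X Y), Fm (f + g) = Fm f + Fm g)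
    (Fm_mem : ∀ {X Y : C.Obj} (i : ℤ) (f : C.Hom X Y),
      f ∈ C.gr X Y i → Fm f ∈ D.gr (F X) (F Y) i)
    (Fm_comp : ∀ {X Y Z : C.Obj} (f : C.Hom Y Z) (g : C.Hom X Y),
      Fm (C.comp f g) = D.comp (Fm f) (Fm g))
    (Fm_one : ∀ X : C.Obj, Fm (C.one X) = D.one (F X))
    (a_mem : ∀ X : C.Obj, a X ∈ D.gr (F X) (F X) 1)
    (Fm_d : ∀ {X Y : C.Obj} (i : ℤ) (f : C.Hom X Y), f ∈ C.gr X Y i →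
      Fm (C.d f) = D.d (Fm f) + D.comp (a Y) (Fm f) - sgn i • D.comp (Fm f) (a X)) :
    ∀ {X Y : C.Obj} (i : ℤ) (g : C.Hom X Y), g ∈ C.gr X Y i →
      D.comp (D.h (F Y) + D.d (a Y) + D.comp (a Y) (a Y) - Fm (C.h Y)) (Fm g)
        = D.comp (Fm g) (D.h (F X) + D.d (a X) + D.comp (a X) (a X) - Fm (C.h X)) :=
  qdg_functor_curvature_is_natural_general C D F Fm a Fm_add Fm_mem Fm_comp a_mem Fm_d
end

section
/- Let B be a CDG-ring and let N be a contractible CDG-module over B, i.e., there is a closed degree-(−1) endomorphism t of N (meaning d(t) := d_N ∘ t + t ∘ d_N = id_N). Let p: P → N be a surjective closed morphism of CDG-modules of degree 0 (p d_P = d_N p) where P is also contractible with contracting homotopy θ (d(θ) = id_P), and assume P is projective in the category of CDG-modules and closed morphisms, in the sense that any closed morphism from P to a target of a surjective closed morphism lifts. Then the kernel K = ker(p) is a CDG-submodule of P and K is contractible: there exists a contracting homotopy θ' on P with p ∘ θ' = t ∘ p, and its restriction to K is a contracting homotopy for K. -/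
/-!
The defect `f = p θ - t p` of `θ` against `t` is a closed degree-`(-1)` morphism `P → N`,
because `d(p θ) = p d(θ) = p = d(t) p = d(t p)`. Projectivity lifts it to a closed
`g : P → P`, and `θ' = θ - g` is again a contracting homotopy, now with `p θ' = t p`;
in particular `θ'` preserves `ker p`.
-/

section HomComplex

variable {M N N' : Type*} [AddCommGroup M] [AddCommGroup N] [AddCommGroup N']

/-- The differential `d(f) = d_N f + f d_M` of the Hom complex, at a map `f` of odd degree. -/
def oddDiff (dM : M →+ M) (dN : N →+ N) : (M →+ N) →+ (M →+ N) where
  toFun f := dN.comp f + f.comp dM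
  map_zero' := by ext; simp
  map_add' f g := by ext; simp only [AddMonoidHom.add_apply, AddMonoidHom.comp_apply, map_add]; abel

@[simp]
theorem oddDiff_apply (dM : M →+ M) (dN : N →+ N) (f : M →+ N) (x : M) :
    oddDiff dM dN f x = dN (f x) + f (dM x) :=
  rfl

theorem oddDiff_comp_left {dM : M →+ M} {dN : N →+ N} {dN' : N' →+ N'} {p : N →+ N'}
    (hp : p.comp dN = dN'.comp p) (f : M →+ N) :
    oddDiff dM dN' (p.comp f) = p.comp (oddDiff dM dN f) := by
  ext x
  have hx : p (dN (f x)) = dN' (p (f x)) := DFunLike.congr_fun hp (f x)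
  simp [hx]

theorem oddDiff_comp_right {dM : M →+ M} {dN : N →+ N} {dN' : N' →+ N'} {p : M →+ N}
    (hp : p.comp dM = dN.comp p) (f : N →+ N') :
    oddDiff dM dN' (f.comp p) = (oddDiff dN dN' f).comp p := by
  ext x
  have hx : p (dM x) = dN (p x) := DFunLike.congr_fun hp x
  simp [hx]

theorem oddDiff_comp_sub_comp_eq_zero {dM : M →+ M} {dN : N →+ N} {p : M →+ N}
    (hp : p.comp dM = dN.comp p) {θ : M →+ M} {t : N →+ N}
    (hθ : oddDiff dM dM θ = .id M) (ht : oddDiff dN dN t = .id N) :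
    oddDiff dM dN (p.comp θ - t.comp p) = 0 := by
  rw [map_sub, oddDiff_comp_left hp, oddDiff_comp_right hp, hθ, ht, AddMonoidHom.comp_id,
    AddMonoidHom.id_comp, sub_self]

theorem oddDiff_sub_eq_id_and_comp_sub {dM : M →+ M} {p : M →+ N} {θ g : M →+ M}
    {t : N →+ N} (hθ : oddDiff dM dM θ = .id M) (hg : oddDiff dM dM g = 0)
    (hpg : p.comp g = p.comp θ - t.comp p) :
    oddDiff dM dM (θ - g) = .id M ∧ p.comp (θ - g) = t.comp p := by
  refine ⟨by rw [map_sub, hθ, hg, sub_zero], ?_⟩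
  rw [AddMonoidHom.comp_sub, hpg, sub_sub_cancel]

end HomComplex

section GradedHoms

variable {B M N P : Type*} [Ring B] [AddCommGroup M] [Module B M] [AddCommGroup N] [Module B N]
  [AddCommGroup P] [Module B P]

def homsOfDegreeNegOne (𝒜 : ℤ → AddSubgroup B) (ℳ : ℤ → AddSubgroup M)
    (𝒩 : ℤ → AddSubgroup N) : AddSubgroup (M →+ N) where
  carrier := {f | (∀ n : ℤ, ∀ x ∈ ℳ n, f x ∈ 𝒩 (n - 1)) ∧
    ∀ i : ℤ, ∀ b ∈ 𝒜 i, ∀ x : M, f (b • x) = sgn i • (b • f x)}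
  zero_mem' := ⟨fun n _ _ => zero_mem _, fun _ _ _ _ => by simp⟩
  add_mem' := fun {f g} hf hg =>
    ⟨fun n x hx => add_mem (hf.1 n x hx) (hg.1 n x hx),
      fun i b hb x => by simp [hf.2 i b hb, hg.2 i b hb, smul_add]⟩
  neg_mem' := fun {f} hf =>
    ⟨fun n x hx => neg_mem (hf.1 n x hx), fun i b hb x => by simp [hf.2 i b hb]⟩

variable {𝒜 : ℤ → AddSubgroup B} {ℳ : ℤ → AddSubgroup M} {𝒩 : ℤ → AddSubgroup N}
  {𝒪 : ℤ → AddSubgroup P}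

theorem comp_mem_homsOfDegreeNegOne_left {p : N →ₗ[B] P} (hp : ∀ n : ℤ, ∀ x ∈ 𝒩 n, p x ∈ 𝒪 n)
    {f : M →+ N} (hf : f ∈ homsOfDegreeNegOne 𝒜 ℳ 𝒩) :
    p.toAddMonoidHom.comp f ∈ homsOfDegreeNegOne 𝒜 ℳ 𝒪 :=
  ⟨fun n x hx => hp _ _ (hf.1 n x hx), fun i b hb x => by simp [hf.2 i b hb]⟩

theorem comp_mem_homsOfDegreeNegOne_right {p : M →ₗ[B] N} (hp : ∀ n : ℤ, ∀ x ∈ ℳ n, p x ∈ 𝒩 n)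
    {f : N →+ P} (hf : f ∈ homsOfDegreeNegOne 𝒜 𝒩 𝒪) :
    f.comp p.toAddMonoidHom ∈ homsOfDegreeNegOne 𝒜 ℳ 𝒪 :=
  ⟨fun n x hx => hf.1 n _ (hp n x hx), fun i b hb x => by simp [hf.2 i b hb]⟩

end GradedHoms

theorem contractible_kernel_of_projective_cover_general
    {B N P : Type*} [Ring B]
    [AddCommGroup N] [Module B N] [AddCommGroup P] [Module B P]
    (𝒜 : ℤ → AddSubgroup B)
    -- the CDG-module `N`
    (ℳN : ℤ → AddSubgroup N)
    (dN : N →+ N)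
    -- the CDG-module `P`
    (ℳP : ℤ → AddSubgroup P)
    (dP : P →+ P)
    -- `p : P → N` is a surjective closed morphism of CDG-modules of degree `0`
    (p : P →ₗ[B] N)
    (p_deg : ∀ n : ℤ, ∀ x ∈ ℳP n, p x ∈ ℳN n)
    (p_closed : ∀ x : P, p (dP x) = dN (p x))
    -- `t` is a contracting homotopy for `N`
    (t : N →+ N)
    (t_deg : ∀ n : ℤ, ∀ m ∈ ℳN n, t m ∈ ℳN (n - 1))
    (t_lin : ∀ i : ℤ, ∀ b ∈ 𝒜 i, ∀ m : N, t (b • m) = sgn i • (b • t m))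
    (t_htpy : ∀ m : N, dN (t m) + t (dN m) = m)
    -- `θ` is a contracting homotopy for `P`
    (θ : P →+ P)
    (θ_deg : ∀ n : ℤ, ∀ x ∈ ℳP n, θ x ∈ ℳP (n - 1))
    (θ_lin : ∀ i : ℤ, ∀ b ∈ 𝒜 i, ∀ x : P, θ (b • x) = sgn i • (b • θ x))
    (θ_htpy : ∀ x : P, dP (θ x) + θ (dP x) = x)
    -- `P` is projective: closed degree-`(-1)` morphisms `P → N` lift along `p`
    (P_proj : ∀ f : P →+ N,
      (∀ n : ℤ, ∀ x ∈ ℳP n, f x ∈ ℳN (n - 1)) →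
      (∀ i : ℤ, ∀ b ∈ 𝒜 i, ∀ x : P, f (b • x) = sgn i • (b • f x)) →
      (∀ x : P, dN (f x) + f (dP x) = 0) →
      ∃ g : P →+ P,
        (∀ n : ℤ, ∀ x ∈ ℳP n, g x ∈ ℳP (n - 1)) ∧
        (∀ i : ℤ, ∀ b ∈ 𝒜 i, ∀ x : P, g (b • x) = sgn i • (b • g x)) ∧
        (∀ x : P, dP (g x) + g (dP x) = 0) ∧
        (∀ x : P, p (g x) = f x)) :
    -- the kernel of `p` is a CDG-submodule, and …
    (∀ x : P, p x = 0 → p (dP x) = 0) ∧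
    -- … there is a contracting homotopy `θ'` on `P` compatible with `p` and `t`,
    -- which therefore restricts to a contracting homotopy for `K = ker p`
    (∃ θ' : P →+ P,
      (∀ n : ℤ, ∀ x ∈ ℳP n, θ' x ∈ ℳP (n - 1)) ∧
      (∀ i : ℤ, ∀ b ∈ 𝒜 i, ∀ x : P, θ' (b • x) = sgn i • (b • θ' x)) ∧
      (∀ x : P, dP (θ' x) + θ' (dP x) = x) ∧
      (∀ x : P, p (θ' x) = t (p x)) ∧
      (∀ x : P, p x = 0 → p (θ' x) = 0)) := by
  refine ⟨fun x hx => by rw [p_closed, hx, map_zero], ?_⟩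
  let q : P →+ N := p.toAddMonoidHom
  have hq : q.comp dP = dN.comp q := AddMonoidHom.ext p_closed
  have hθ : θ ∈ homsOfDegreeNegOne 𝒜 ℳP ℳP := ⟨θ_deg, θ_lin⟩
  have hθ_htpy : oddDiff dP dP θ = .id P := AddMonoidHom.ext θ_htpy
  have hf : q.comp θ - t.comp q ∈ homsOfDegreeNegOne 𝒜 ℳP ℳN :=
    sub_mem (comp_mem_homsOfDegreeNegOne_left p_deg hθ)
      (comp_mem_homsOfDegreeNegOne_right p_deg ⟨t_deg, t_lin⟩)
  have hf_closed := oddDiff_comp_sub_comp_eq_zero hq hθ_htpy (AddMonoidHom.ext t_htpy)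
  obtain ⟨g, g_deg, g_lin, g_closed, g_lift⟩ :=
    P_proj _ hf.1 hf.2 (DFunLike.congr_fun hf_closed)
  have hθ' : θ - g ∈ homsOfDegreeNegOne 𝒜 ℳP ℳP := sub_mem hθ ⟨g_deg, g_lin⟩
  obtain ⟨hθ'_htpy, hθ'_lift⟩ := oddDiff_sub_eq_id_and_comp_sub hθ_htpy
    (AddMonoidHom.ext g_closed) (p := q) (AddMonoidHom.ext g_lift)
  have hθ'_lift_apply (x : P) : p ((θ - g) x) = t (p x) := DFunLike.congr_fun hθ'_lift x
  exact ⟨θ - g, hθ'.1, hθ'.2, DFunLike.congr_fun hθ'_htpy, hθ'_lift_apply,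
    fun x hx => by rw [hθ'_lift_apply, hx, map_zero]⟩

/-- Let `B` be a CDG-ring, `N` a contractible CDG-module over `B`
with contracting homotopy `t` (a degree-`(-1)` module endomorphism with
`d_N t + t d_N = id`), and `p : P → N` a surjective closed degree-`0` morphism of
CDG-modules, where `P` is contractible with contracting homotopy `θ` and is
projective in the sense that closed degree-`(-1)` morphisms out of `P` lift along `p`.
Then the kernel `K = ker p` is a CDG-submodule of `P` and is contractible: there is a
contracting homotopy `θ'` on `P` with `p ∘ θ' = t ∘ p`, whose restriction to `K` is a
contracting homotopy for `K`. -/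
theorem contractible_kernel_of_projective_cover
    {B N P : Type*} [Ring B]
    [AddCommGroup N] [Module B N] [AddCommGroup P] [Module B P]
    (𝒜 : ℤ → AddSubgroup B) [GradedRing 𝒜]
    (d : B →+ B) (h : B)
    (d_deg : ∀ i : ℤ, ∀ a ∈ 𝒜 i, d a ∈ 𝒜 (i + 1))
    (leibniz : ∀ i : ℤ, ∀ a ∈ 𝒜 i, ∀ x : B,
      d (a * x) = d a * x + sgn i • (a * d x))
    (h_deg : h ∈ 𝒜 2)
    (d_sq : ∀ x : B, d (d x) = h * x - x * h)
    (d_h : d h = 0)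
    -- the CDG-module `N`
    (ℳN : ℤ → AddSubgroup N)
    (smulN_mem : ∀ i n : ℤ, ∀ b ∈ 𝒜 i, ∀ m ∈ ℳN n, b • m ∈ ℳN (i + n))
    (dN : N →+ N)
    (dN_deg : ∀ n : ℤ, ∀ m ∈ ℳN n, dN m ∈ ℳN (n + 1))
    (dN_leibniz : ∀ i : ℤ, ∀ b ∈ 𝒜 i, ∀ m : N,
      dN (b • m) = d b • m + sgn i • (b • dN m))
    (dN_sq : ∀ m : N, dN (dN m) = h • m)
    -- the CDG-module `P`
    (ℳP : ℤ → AddSubgroup P)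
    (smulP_mem : ∀ i n : ℤ, ∀ b ∈ 𝒜 i, ∀ x ∈ ℳP n, b • x ∈ ℳP (i + n))
    (dP : P →+ P)
    (dP_deg : ∀ n : ℤ, ∀ x ∈ ℳP n, dP x ∈ ℳP (n + 1))
    (dP_leibniz : ∀ i : ℤ, ∀ b ∈ 𝒜 i, ∀ x : P,
      dP (b • x) = d b • x + sgn i • (b • dP x))
    (dP_sq : ∀ x : P, dP (dP x) = h • x)
    -- `p : P → N` is a surjective closed morphism of CDG-modules of degree `0`
    (p : P →ₗ[B] N)
    (p_deg : ∀ n : ℤ, ∀ x ∈ ℳP n, p x ∈ ℳN n)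
    (p_closed : ∀ x : P, p (dP x) = dN (p x))
    (p_surj : Function.Surjective p)
    -- `t` is a contracting homotopy for `N`
    (t : N →+ N)
    (t_deg : ∀ n : ℤ, ∀ m ∈ ℳN n, t m ∈ ℳN (n - 1))
    (t_lin : ∀ i : ℤ, ∀ b ∈ 𝒜 i, ∀ m : N, t (b • m) = sgn i • (b • t m))
    (t_htpy : ∀ m : N, dN (t m) + t (dN m) = m)
    -- `θ` is a contracting homotopy for `P`
    (θ : P →+ P)
    (θ_deg : ∀ n : ℤ, ∀ x ∈ ℳP n, θ x ∈ ℳP (n - 1))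
    (θ_lin : ∀ i : ℤ, ∀ b ∈ 𝒜 i, ∀ x : P, θ (b • x) = sgn i • (b • θ x))
    (θ_htpy : ∀ x : P, dP (θ x) + θ (dP x) = x)
    -- `P` is projective: closed degree-`(-1)` morphisms `P → N` lift along `p`
    (P_proj : ∀ f : P →+ N,
      (∀ n : ℤ, ∀ x ∈ ℳP n, f x ∈ ℳN (n - 1)) →
      (∀ i : ℤ, ∀ b ∈ 𝒜 i, ∀ x : P, f (b • x) = sgn i • (b • f x)) →
      (∀ x : P, dN (f x) + f (dP x) = 0) →
      ∃ g : P →+ P,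
        (∀ n : ℤ, ∀ x ∈ ℳP n, g x ∈ ℳP (n - 1)) ∧
        (∀ i : ℤ, ∀ b ∈ 𝒜 i, ∀ x : P, g (b • x) = sgn i • (b • g x)) ∧
        (∀ x : P, dP (g x) + g (dP x) = 0) ∧
        (∀ x : P, p (g x) = f x)) :
    -- the kernel of `p` is a CDG-submodule, and …
    (∀ x : P, p x = 0 → p (dP x) = 0) ∧
    -- … there is a contracting homotopy `θ'` on `P` compatible with `p` and `t`,
    -- which therefore restricts to a contracting homotopy for `K = ker p`
    (∃ θ' : P →+ P,
      (∀ n : ℤ, ∀ x ∈ ℳP n, θ' x ∈ ℳP (n - 1)) ∧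
      (∀ i : ℤ, ∀ b ∈ 𝒜 i, ∀ x : P, θ' (b • x) = sgn i • (b • θ' x)) ∧
      (∀ x : P, dP (θ' x) + θ' (dP x) = x) ∧
      (∀ x : P, p (θ' x) = t (p x)) ∧
      (∀ x : P, p x = 0 → p (θ' x) = 0)) :=
  contractible_kernel_of_projective_cover_general 𝒜 ℳN dN ℳP dP p p_deg p_closed t t_deg t_lin
    t_htpy θ θ_deg θ_lin θ_htpy P_proj
end
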